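/- (Proposition 4.1, asymptotics of the algebraic two-soliton in the k1-frame) With F1(x,t) = A1(x,t)/B1(x,t) and F3(x,t) = A2(x,t)/B2(x,t) as in the context, for every X1 ∈ ℝ the function t ↦ F1(X1 + t/k1⁴, t) tends to 4k1²/(1 + 4k1⁴·X1²) as t → +∞ and as t → −∞, and the function t ↦ F3(X1 + t/k1⁴, t) tends to 4/(k1²·(1 + 4k1⁴·X1²)) as t → +∞ and as t → −∞. -/
import Mathlib


open Real Filter

noncomputable section AlgebraicTwoSoliton

/-- Phase `θ1 = −(t + k1⁴x)/k1²`. -/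
def th1 (k1 : ℝ) (p : ℝ × ℝ) : ℝ := -(p.2 + k1 ^ 4 * p.1) / k1 ^ 2

/-- Phase `θ2 = −(t + k2⁴x)/k2²`. -/
def th2 (k2 : ℝ) (p : ℝ × ℝ) : ℝ := -(p.2 + k2 ^ 4 * p.1) / k2 ^ 2

def M1 (k1 k2 : ℝ) (p : ℝ × ℝ) : ℝ :=
  2 * k2 ^ 3 * (k1 ^ 2 - k2 ^ 2) * (k1 ^ 4 * p.1 - p.2)

def M2 (k1 k2 : ℝ) : ℝ := -(k1 ^ 2 * k2 ^ 3 * (3 * k1 ^ 2 + k2 ^ 2))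

def M3 (k1 k2 : ℝ) (p : ℝ × ℝ) : ℝ :=
  2 * k1 ^ 3 * (k1 ^ 2 - k2 ^ 2) * (k2 ^ 4 * p.1 - p.2)

def M4 (k1 k2 : ℝ) : ℝ := k1 ^ 3 * k2 ^ 2 * (k1 ^ 2 + 3 * k2 ^ 2)

def M5 (k1 k2 : ℝ) (p : ℝ × ℝ) : ℝ :=
  2 * (k1 ^ 2 - k2 ^ 2) ^ 2 * (k1 ^ 2 + k2 ^ 2) * (k1 ^ 2 * k2 ^ 2 * p.1 - p.2)

def M6 (k1 k2 : ℝ) (p : ℝ × ℝ) : ℝ :=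
  k1 ^ 6 * k2 ^ 2 + 6 * k1 ^ 4 * k2 ^ 4 + k1 ^ 2 * k2 ^ 6
    - 4 * (k1 ^ 2 - k2 ^ 2) ^ 2 * p.2 ^ 2
    + 4 * (k1 ^ 2 - k2 ^ 2) ^ 2 * (k1 ^ 4 + k2 ^ 4) * p.2 * p.1
    - 4 * k1 ^ 4 * k2 ^ 4 * (k1 ^ 2 - k2 ^ 2) ^ 2 * p.1 ^ 2

def N1 (k1 k2 : ℝ) (p : ℝ × ℝ) : ℝ :=
  2 * k1 * (k1 ^ 2 - k2 ^ 2) * (k2 ^ 4 * p.1 - p.2)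

def N2 (k1 k2 : ℝ) : ℝ := 3 * k1 ^ 3 * k2 ^ 2 + k1 * k2 ^ 4

def N3 (k1 k2 : ℝ) (p : ℝ × ℝ) : ℝ :=
  2 * k2 * (k1 ^ 2 - k2 ^ 2) * (k1 ^ 4 * p.1 - p.2)

def N4 (k1 k2 : ℝ) : ℝ := -(k1 ^ 4 * k2) - 3 * k1 ^ 2 * k2 ^ 3

def N5 (k1 k2 : ℝ) (p : ℝ × ℝ) : ℝ :=
  2 * (k1 ^ 2 - k2 ^ 2) ^ 2 * (k1 ^ 2 + k2 ^ 2) * (k1 ^ 2 * k2 ^ 2 * p.1 - p.2)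

def N6 (k1 k2 : ℝ) (p : ℝ × ℝ) : ℝ :=
  -(k1 ^ 6 * k2 ^ 2) - 6 * k1 ^ 4 * k2 ^ 4 - k1 ^ 2 * k2 ^ 6
    + 4 * (k1 ^ 2 - k2 ^ 2) ^ 2 * p.2 ^ 2
    - 4 * (k1 ^ 2 - k2 ^ 2) ^ 2 * (k1 ^ 4 + k2 ^ 4) * p.2 * p.1
    + 4 * k1 ^ 4 * k2 ^ 4 * (k1 ^ 2 - k2 ^ 2) ^ 2 * p.1 ^ 2

/-- Numerator of the squared envelope `|q1|²`. -/
def A1 (k1 k2 : ℝ) (p : ℝ × ℝ) : ℝ :=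
  4 * (k1 ^ 2 - k2 ^ 2) ^ 2 *
    ((M1 k1 k2 p * cos (th1 k1 p) - M2 k1 k2 * sin (th1 k1 p)
        + M3 k1 k2 p * cos (th2 k2 p) - M4 k1 k2 * sin (th2 k2 p)) ^ 2
      + (M1 k1 k2 p * sin (th1 k1 p) + M2 k1 k2 * cos (th1 k1 p)
        + M3 k1 k2 p * sin (th2 k2 p) + M4 k1 k2 * cos (th2 k2 p)) ^ 2)

/-- Denominator of the squared envelope `|q1|²`. -/
def B1 (k1 k2 : ℝ) (p : ℝ × ℝ) : ℝ :=
  (M5 k1 k2 p - 4 * k1 ^ 5 * k2 ^ 3 * sin (th2 k2 p - th1 k1 p)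
      + 4 * k1 ^ 3 * k2 ^ 5 * sin (th2 k2 p - th1 k1 p)) ^ 2
    + (M6 k1 k2 p - 4 * k1 ^ 5 * k2 ^ 3 * cos (th2 k2 p - th1 k1 p)
      - 4 * k1 ^ 3 * k2 ^ 5 * cos (th2 k2 p - th1 k1 p)) ^ 2

/-- Numerator of the squared envelope `|q3|²`. -/
def A2 (k1 k2 : ℝ) (p : ℝ × ℝ) : ℝ :=
  4 * (k1 ^ 2 - k2 ^ 2) ^ 2 *
    ((N1 k1 k2 p * cos (th1 k1 p) + N2 k1 k2 * sin (th1 k1 p)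
        + N3 k1 k2 p * cos (th2 k2 p) + N4 k1 k2 * sin (th2 k2 p)) ^ 2
      + (-(N1 k1 k2 p) * sin (th1 k1 p) + N2 k1 k2 * cos (th1 k1 p)
        - N3 k1 k2 p * sin (th2 k2 p) + N4 k1 k2 * cos (th2 k2 p)) ^ 2)

/-- Denominator of the squared envelope `|q3|²`. -/
def B2 (k1 k2 : ℝ) (p : ℝ × ℝ) : ℝ :=
  (N5 k1 k2 p + 4 * k1 ^ 5 * k2 ^ 3 * sin (th1 k1 p - th2 k2 p)
      - 4 * k1 ^ 3 * k2 ^ 5 * sin (th1 k1 p - th2 k2 p)) ^ 2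
    + (N6 k1 k2 p + 4 * k1 ^ 5 * k2 ^ 3 * cos (th1 k1 p - th2 k2 p)
      + 4 * k1 ^ 3 * k2 ^ 5 * cos (th1 k1 p - th2 k2 p)) ^ 2

/-- The squared envelope `|q1|² = A1/B1` of the algebraic two-soliton. -/
def F1 (k1 k2 : ℝ) (p : ℝ × ℝ) : ℝ := A1 k1 k2 p / B1 k1 k2 p

/-- The squared envelope `|q3|² = A2/B2` of the algebraic two-soliton. -/
def F3 (k1 k2 : ℝ) (p : ℝ × ℝ) : ℝ := A2 k1 k2 p / B2 k1 k2 p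

end AlgebraicTwoSoliton

open Real Filter in
lemma A1_expand (k1 k2 : ℝ) (p : ℝ × ℝ) :
    A1 k1 k2 p = 4 * (k1 ^ 2 - k2 ^ 2) ^ 2 *
      (M1 k1 k2 p ^ 2 + M2 k1 k2 ^ 2 + M3 k1 k2 p ^ 2 + M4 k1 k2 ^ 2
        + 2 * (M1 k1 k2 p * M3 k1 k2 p + M2 k1 k2 * M4 k1 k2) * cos (th1 k1 p - th2 k2 p)
        + 2 * (M1 k1 k2 p * M4 k1 k2 - M2 k1 k2 * M3 k1 k2 p) * sin (th1 k1 p - th2 k2 p)) := by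
  unfold A1
  rw [Real.cos_sub, Real.sin_sub]
  linear_combination (4 * (k1 ^ 2 - k2 ^ 2) ^ 2 * (M1 k1 k2 p ^ 2 + M2 k1 k2 ^ 2)) *
      Real.sin_sq_add_cos_sq (th1 k1 p)
    + (4 * (k1 ^ 2 - k2 ^ 2) ^ 2 * (M3 k1 k2 p ^ 2 + M4 k1 k2 ^ 2)) *
      Real.sin_sq_add_cos_sq (th2 k2 p)

open Real Filter in
lemma A2_expand (k1 k2 : ℝ) (p : ℝ × ℝ) :
    A2 k1 k2 p = 4 * (k1 ^ 2 - k2 ^ 2) ^ 2 *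
      (N1 k1 k2 p ^ 2 + N2 k1 k2 ^ 2 + N3 k1 k2 p ^ 2 + N4 k1 k2 ^ 2
        + 2 * (N1 k1 k2 p * N3 k1 k2 p + N2 k1 k2 * N4 k1 k2) * cos (th1 k1 p - th2 k2 p)
        - 2 * (N1 k1 k2 p * N4 k1 k2 - N2 k1 k2 * N3 k1 k2 p) * sin (th1 k1 p - th2 k2 p)) := by
  unfold A2
  rw [Real.cos_sub, Real.sin_sub]
  linear_combination (4 * (k1 ^ 2 - k2 ^ 2) ^ 2 * (N1 k1 k2 p ^ 2 + N2 k1 k2 ^ 2)) *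
      Real.sin_sq_add_cos_sq (th1 k1 p)
    + (4 * (k1 ^ 2 - k2 ^ 2) ^ 2 * (N3 k1 k2 p ^ 2 + N4 k1 k2 ^ 2)) *
      Real.sin_sq_add_cos_sq (th2 k2 p)

open Real Filter in
private lemma tendsto_lin_div {l : Filter ℝ} (hl : Tendsto (fun t : ℝ => 1 / t) l (nhds 0))
    (hne : ∀ᶠ t in l, t ≠ 0) (a c : ℝ) :
    Tendsto (fun t : ℝ => (a + c * t) / t) l (nhds c) := by
  have h : Tendsto (fun t : ℝ => a * (1 / t) + c) l (nhds (a * 0 + c)) :=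
    (hl.const_mul a).add tendsto_const_nhds
  rw [mul_zero, zero_add] at h
  refine h.congr' ?_
  filter_upwards [hne] with t ht
  field_simp

open Real Filter in
private lemma tendsto_aff_div_sq_mul {l : Filter ℝ} (hl : Tendsto (fun t : ℝ => 1 / t) l (nhds 0))
    (hne : ∀ᶠ t in l, t ≠ 0) (a c C : ℝ) (w : ℝ → ℝ) (hw : ∀ t, |w t| ≤ C) :
    Tendsto (fun t : ℝ => (a + c * t) / t ^ 2 * w t) l (nhds 0) := by
  have h0 : Tendsto (fun t : ℝ => a * (1 / t) ^ 2 + c * (1 / t)) l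
      (nhds (a * 0 ^ 2 + c * 0)) := ((hl.pow 2).const_mul a).add (hl.const_mul c)
  have h0' : Tendsto (fun t : ℝ => a * (1 / t) ^ 2 + c * (1 / t)) l (nhds 0) := by
    simpa using h0
  have h1 := bdd_le_mul_tendsto_zero' C (Filter.Eventually.of_forall hw) h0'
  refine h1.congr' ?_
  filter_upwards [hne] with t ht
  field_simp

open Real Filter in
private lemma trig_abs_le (α β : ℝ) (θ : ℝ) : |α * Real.cos θ + β * Real.sin θ| ≤ |α| + |β| := by
  calc |α * Real.cos θ + β * Real.sin θ| ≤ |α * Real.cos θ| + |β * Real.sin θ| := abs_add_le _ _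
    _ ≤ |α| * 1 + |β| * 1 := by
        rw [abs_mul, abs_mul]
        gcongr
        · exact Real.abs_cos_le_one θ
        · exact Real.abs_sin_le_one θ
    _ = |α| + |β| := by ring

open Real Filter in
private lemma tendsto_main {l : Filter ℝ} (hl : Tendsto (fun t : ℝ => 1 / t) l (nhds 0))
    (hne : ∀ᶠ t in l, t ≠ 0) (u v ψ φ : ℝ → ℝ)
    (KK m1 m2 m4 a3 c3 a5 c5 a6 c6 e1 e2 L : ℝ)
    (hu : ∀ t : ℝ, t ≠ 0 → u t / t ^ 2 =
      4 * KK ^ 2 * ((a3 + c3 * t) / t) ^ 2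
      + (4 * KK ^ 2 * (m1 ^ 2 + m2 ^ 2 + m4 ^ 2) + 0 * t) / t ^ 2 * 1
      + (8 * KK ^ 2 * (m1 * a3 + m2 * m4) + 8 * KK ^ 2 * (m1 * c3) * t) / t ^ 2
          * Real.cos (ψ t)
      + (8 * KK ^ 2 * (m1 * m4 - m2 * a3) + (-(8 * KK ^ 2 * (m2 * c3))) * t) / t ^ 2
          * Real.sin (ψ t))
    (hv : ∀ t : ℝ, t ≠ 0 → v t / t ^ 2 =
      ((a5 + c5 * t) / t + (0 + e1 * t) / t ^ 2 * Real.sin (φ t)) ^ 2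
      + ((a6 + c6 * t) / t + (0 + e2 * t) / t ^ 2 * Real.cos (φ t)) ^ 2)
    (hc : c5 ^ 2 + c6 ^ 2 ≠ 0)
    (hL : L = 4 * KK ^ 2 * c3 ^ 2 / (c5 ^ 2 + c6 ^ 2)) :
    Tendsto (fun t => u t / v t) l (nhds L) := by
  have hA : Tendsto (fun t : ℝ => u t / t ^ 2) l (nhds (4 * KK ^ 2 * c3 ^ 2)) := by
    have h1 : Tendsto (fun t : ℝ => 4 * KK ^ 2 * ((a3 + c3 * t) / t) ^ 2) l
        (nhds (4 * KK ^ 2 * c3 ^ 2)) :=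
      ((tendsto_lin_div hl hne a3 c3).pow 2).const_mul _
    have h2 := tendsto_aff_div_sq_mul hl hne (4 * KK ^ 2 * (m1 ^ 2 + m2 ^ 2 + m4 ^ 2)) 0 1
      (fun _ => (1 : ℝ)) (fun t => by norm_num)
    have h3 := tendsto_aff_div_sq_mul hl hne (8 * KK ^ 2 * (m1 * a3 + m2 * m4))
      (8 * KK ^ 2 * (m1 * c3)) _ (fun t => Real.cos (ψ t)) (fun t => Real.abs_cos_le_one _)
    have h4 := tendsto_aff_div_sq_mul hl hne (8 * KK ^ 2 * (m1 * m4 - m2 * a3))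
      (-(8 * KK ^ 2 * (m2 * c3))) _ (fun t => Real.sin (ψ t)) (fun t => Real.abs_sin_le_one _)
    have h := ((h1.add h2).add h3).add h4
    rw [add_zero, add_zero, add_zero] at h
    refine h.congr' ?_
    filter_upwards [hne] with t ht
    exact (hu t ht).symm
  have hB : Tendsto (fun t : ℝ => v t / t ^ 2) l (nhds (c5 ^ 2 + c6 ^ 2)) := by
    have h5 : Tendsto (fun t : ℝ => (a5 + c5 * t) / t + (0 + e1 * t) / t ^ 2 * Real.sin (φ t))
        l (nhds c5) := by
      have := (tendsto_lin_div hl hne a5 c5).add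
        (tendsto_aff_div_sq_mul hl hne 0 e1 1 (fun t => Real.sin (φ t))
          (fun t => Real.abs_sin_le_one _))
      simpa using this
    have h6 : Tendsto (fun t : ℝ => (a6 + c6 * t) / t + (0 + e2 * t) / t ^ 2 * Real.cos (φ t))
        l (nhds c6) := by
      have := (tendsto_lin_div hl hne a6 c6).add
        (tendsto_aff_div_sq_mul hl hne 0 e2 1 (fun t => Real.cos (φ t))
          (fun t => Real.abs_cos_le_one _))
      simpa using this
    have h := (h5.pow 2).add (h6.pow 2)
    refine h.congr' ?_
    filter_upwards [hne] with t ht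
    exact (hv t ht).symm
  have hdiv := hA.div hB hc
  rw [← hL] at hdiv
  refine hdiv.congr' ?_
  filter_upwards [hne] with t ht
  exact div_div_div_cancel_right₀ (pow_ne_zero 2 ht) _ _

noncomputable section AuxConsts

private def m1v (k1 k2 X1 : ℝ) : ℝ := 2 * k2 ^ 3 * (k1 ^ 2 - k2 ^ 2) * (k1 ^ 4 * X1)
private def a3v (k1 k2 X1 : ℝ) : ℝ := 2 * k1 ^ 3 * (k1 ^ 2 - k2 ^ 2) * (k2 ^ 4 * X1)
private def c3v (k1 k2 : ℝ) : ℝ := -(2 * (k1 ^ 2 - k2 ^ 2) ^ 2 * (k1 ^ 2 + k2 ^ 2) / k1)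
private def a5v (k1 k2 X1 : ℝ) : ℝ :=
  2 * (k1 ^ 2 - k2 ^ 2) ^ 2 * (k1 ^ 2 + k2 ^ 2) * (k1 ^ 2 * k2 ^ 2 * X1)
private def c5v (k1 k2 : ℝ) : ℝ := -(2 * (k1 ^ 2 - k2 ^ 2) ^ 3 * (k1 ^ 2 + k2 ^ 2) / k1 ^ 2)
private def a6v (k1 k2 X1 : ℝ) : ℝ :=
  k1 ^ 6 * k2 ^ 2 + 6 * k1 ^ 4 * k2 ^ 4 + k1 ^ 2 * k2 ^ 6
    - 4 * k1 ^ 4 * k2 ^ 4 * (k1 ^ 2 - k2 ^ 2) ^ 2 * X1 ^ 2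
private def c6v (k1 k2 X1 : ℝ) : ℝ := 4 * (k1 ^ 2 - k2 ^ 2) ^ 3 * (k1 ^ 2 + k2 ^ 2) * X1
private def b1v (k1 k2 X1 : ℝ) : ℝ := 2 * k1 * (k1 ^ 2 - k2 ^ 2) * (k2 ^ 4 * X1)
private def d1v (k1 k2 : ℝ) : ℝ := -(2 * (k1 ^ 2 - k2 ^ 2) ^ 2 * (k1 ^ 2 + k2 ^ 2) / k1 ^ 3)
private def n3v (k1 k2 X1 : ℝ) : ℝ := 2 * k2 * (k1 ^ 2 - k2 ^ 2) * (k1 ^ 4 * X1)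

private lemma M1_line (k1 k2 X1 t : ℝ) (hk1 : k1 ≠ 0) :
    M1 k1 k2 (X1 + t / k1 ^ 4, t) = m1v k1 k2 X1 := by
  have h : k1 ^ 4 * (X1 + t / k1 ^ 4) - t = k1 ^ 4 * X1 := by field_simp; ring
  show 2 * k2 ^ 3 * (k1 ^ 2 - k2 ^ 2) * (k1 ^ 4 * (X1 + t / k1 ^ 4) - t) = _
  rw [h]; rfl

private lemma M3_line (k1 k2 X1 t : ℝ) (hk1 : k1 ≠ 0) :
    M3 k1 k2 (X1 + t / k1 ^ 4, t) = a3v k1 k2 X1 + c3v k1 k2 * t := by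
  show 2 * k1 ^ 3 * (k1 ^ 2 - k2 ^ 2) * (k2 ^ 4 * (X1 + t / k1 ^ 4) - t) = _
  simp only [a3v, c3v]
  first | (field_simp; ring) | field_simp | ring

private lemma M5_line (k1 k2 X1 t : ℝ) (hk1 : k1 ≠ 0) :
    M5 k1 k2 (X1 + t / k1 ^ 4, t) = a5v k1 k2 X1 + c5v k1 k2 * t := by
  show 2 * (k1 ^ 2 - k2 ^ 2) ^ 2 * (k1 ^ 2 + k2 ^ 2) * (k1 ^ 2 * k2 ^ 2 * (X1 + t / k1 ^ 4) - t)
    = _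
  simp only [a5v, c5v]
  first | (field_simp; ring) | field_simp | ring

private lemma M6_line (k1 k2 X1 t : ℝ) (hk1 : k1 ≠ 0) :
    M6 k1 k2 (X1 + t / k1 ^ 4, t) = a6v k1 k2 X1 + c6v k1 k2 X1 * t := by
  show k1 ^ 6 * k2 ^ 2 + 6 * k1 ^ 4 * k2 ^ 4 + k1 ^ 2 * k2 ^ 6
      - 4 * (k1 ^ 2 - k2 ^ 2) ^ 2 * t ^ 2
      + 4 * (k1 ^ 2 - k2 ^ 2) ^ 2 * (k1 ^ 4 + k2 ^ 4) * t * (X1 + t / k1 ^ 4)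
      - 4 * k1 ^ 4 * k2 ^ 4 * (k1 ^ 2 - k2 ^ 2) ^ 2 * (X1 + t / k1 ^ 4) ^ 2 = _
  simp only [a6v, c6v]
  first | (field_simp; ring) | field_simp | ring

private lemma N1_line (k1 k2 X1 t : ℝ) (hk1 : k1 ≠ 0) :
    N1 k1 k2 (X1 + t / k1 ^ 4, t) = b1v k1 k2 X1 + d1v k1 k2 * t := by
  show 2 * k1 * (k1 ^ 2 - k2 ^ 2) * (k2 ^ 4 * (X1 + t / k1 ^ 4) - t) = _
  simp only [b1v, d1v]
  first | (field_simp; ring) | field_simp | ring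

private lemma N3_line (k1 k2 X1 t : ℝ) (hk1 : k1 ≠ 0) :
    N3 k1 k2 (X1 + t / k1 ^ 4, t) = n3v k1 k2 X1 := by
  have h : k1 ^ 4 * (X1 + t / k1 ^ 4) - t = k1 ^ 4 * X1 := by field_simp; ring
  show 2 * k2 * (k1 ^ 2 - k2 ^ 2) * (k1 ^ 4 * (X1 + t / k1 ^ 4) - t) = _
  rw [h]; rfl

private lemma N5_line (k1 k2 X1 t : ℝ) (hk1 : k1 ≠ 0) :
    N5 k1 k2 (X1 + t / k1 ^ 4, t) = a5v k1 k2 X1 + c5v k1 k2 * t := by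
  show 2 * (k1 ^ 2 - k2 ^ 2) ^ 2 * (k1 ^ 2 + k2 ^ 2) * (k1 ^ 2 * k2 ^ 2 * (X1 + t / k1 ^ 4) - t)
    = _
  simp only [a5v, c5v]
  first | (field_simp; ring) | field_simp | ring

private lemma N6_line (k1 k2 X1 t : ℝ) (hk1 : k1 ≠ 0) :
    N6 k1 k2 (X1 + t / k1 ^ 4, t) = -(a6v k1 k2 X1) + -(c6v k1 k2 X1) * t := by
  show -(k1 ^ 6 * k2 ^ 2) - 6 * k1 ^ 4 * k2 ^ 4 - k1 ^ 2 * k2 ^ 6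
      + 4 * (k1 ^ 2 - k2 ^ 2) ^ 2 * t ^ 2
      - 4 * (k1 ^ 2 - k2 ^ 2) ^ 2 * (k1 ^ 4 + k2 ^ 4) * t * (X1 + t / k1 ^ 4)
      + 4 * k1 ^ 4 * k2 ^ 4 * (k1 ^ 2 - k2 ^ 2) ^ 2 * (X1 + t / k1 ^ 4) ^ 2 = _
  simp only [a6v, c6v]
  first | (field_simp; ring) | field_simp | ring

end AuxConsts

open Real in
private lemma huA1 (k1 k2 X1 : ℝ) (hk1 : k1 ≠ 0) (t : ℝ) (ht : t ≠ 0) :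
    A1 k1 k2 (X1 + t / k1 ^ 4, t) / t ^ 2 =
      4 * (k1 ^ 2 - k2 ^ 2) ^ 2 * ((a3v k1 k2 X1 + c3v k1 k2 * t) / t) ^ 2
      + (4 * (k1 ^ 2 - k2 ^ 2) ^ 2 * ((m1v k1 k2 X1) ^ 2 + (M2 k1 k2) ^ 2 + (M4 k1 k2) ^ 2)
          + 0 * t) / t ^ 2 * 1
      + (8 * (k1 ^ 2 - k2 ^ 2) ^ 2 * (m1v k1 k2 X1 * a3v k1 k2 X1 + M2 k1 k2 * M4 k1 k2)
          + 8 * (k1 ^ 2 - k2 ^ 2) ^ 2 * (m1v k1 k2 X1 * c3v k1 k2) * t) / t ^ 2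
          * Real.cos (th1 k1 (X1 + t / k1 ^ 4, t) - th2 k2 (X1 + t / k1 ^ 4, t))
      + (8 * (k1 ^ 2 - k2 ^ 2) ^ 2 * (m1v k1 k2 X1 * M4 k1 k2 - M2 k1 k2 * a3v k1 k2 X1)
          + (-(8 * (k1 ^ 2 - k2 ^ 2) ^ 2 * (M2 k1 k2 * c3v k1 k2))) * t) / t ^ 2
          * Real.sin (th1 k1 (X1 + t / k1 ^ 4, t) - th2 k2 (X1 + t / k1 ^ 4, t)) := by
  rw [A1_expand, M1_line k1 k2 X1 t hk1, M3_line k1 k2 X1 t hk1]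
  simp only [m1v, a3v, c3v]
  field_simp
  ring

open Real in
private lemma huA2 (k1 k2 X1 : ℝ) (hk1 : k1 ≠ 0) (t : ℝ) (ht : t ≠ 0) :
    A2 k1 k2 (X1 + t / k1 ^ 4, t) / t ^ 2 =
      4 * (k1 ^ 2 - k2 ^ 2) ^ 2 * ((b1v k1 k2 X1 + d1v k1 k2 * t) / t) ^ 2
      + (4 * (k1 ^ 2 - k2 ^ 2) ^ 2 * ((n3v k1 k2 X1) ^ 2 + (N4 k1 k2) ^ 2 + (N2 k1 k2) ^ 2)
          + 0 * t) / t ^ 2 * 1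
      + (8 * (k1 ^ 2 - k2 ^ 2) ^ 2 * (n3v k1 k2 X1 * b1v k1 k2 X1 + N4 k1 k2 * N2 k1 k2)
          + 8 * (k1 ^ 2 - k2 ^ 2) ^ 2 * (n3v k1 k2 X1 * d1v k1 k2) * t) / t ^ 2
          * Real.cos (th1 k1 (X1 + t / k1 ^ 4, t) - th2 k2 (X1 + t / k1 ^ 4, t))
      + (8 * (k1 ^ 2 - k2 ^ 2) ^ 2 * (n3v k1 k2 X1 * N2 k1 k2 - N4 k1 k2 * b1v k1 k2 X1)
          + (-(8 * (k1 ^ 2 - k2 ^ 2) ^ 2 * (N4 k1 k2 * d1v k1 k2))) * t) / t ^ 2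
          * Real.sin (th1 k1 (X1 + t / k1 ^ 4, t) - th2 k2 (X1 + t / k1 ^ 4, t)) := by
  rw [A2_expand, N3_line k1 k2 X1 t hk1, N1_line k1 k2 X1 t hk1]
  simp only [n3v, b1v, d1v]
  field_simp
  ring

open Real in
private lemma hvB1 (k1 k2 X1 : ℝ) (hk1 : k1 ≠ 0) (t : ℝ) (ht : t ≠ 0) :
    B1 k1 k2 (X1 + t / k1 ^ 4, t) / t ^ 2 =
      ((a5v k1 k2 X1 + c5v k1 k2 * t) / t
          + (0 + (-(4 * k1 ^ 5 * k2 ^ 3 - 4 * k1 ^ 3 * k2 ^ 5)) * t) / t ^ 2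
            * Real.sin (th2 k2 (X1 + t / k1 ^ 4, t) - th1 k1 (X1 + t / k1 ^ 4, t))) ^ 2
      + ((a6v k1 k2 X1 + c6v k1 k2 X1 * t) / t
          + (0 + (-(4 * k1 ^ 5 * k2 ^ 3 + 4 * k1 ^ 3 * k2 ^ 5)) * t) / t ^ 2
            * Real.cos (th2 k2 (X1 + t / k1 ^ 4, t) - th1 k1 (X1 + t / k1 ^ 4, t))) ^ 2 := by
  simp only [B1]
  rw [M5_line k1 k2 X1 t hk1, M6_line k1 k2 X1 t hk1]
  field_simp
  ring

open Real in
private lemma hvB2 (k1 k2 X1 : ℝ) (hk1 : k1 ≠ 0) (t : ℝ) (ht : t ≠ 0) :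
    B2 k1 k2 (X1 + t / k1 ^ 4, t) / t ^ 2 =
      ((a5v k1 k2 X1 + c5v k1 k2 * t) / t
          + (0 + (4 * k1 ^ 5 * k2 ^ 3 - 4 * k1 ^ 3 * k2 ^ 5) * t) / t ^ 2
            * Real.sin (th1 k1 (X1 + t / k1 ^ 4, t) - th2 k2 (X1 + t / k1 ^ 4, t))) ^ 2
      + ((-(a6v k1 k2 X1) + -(c6v k1 k2 X1) * t) / t
          + (0 + (4 * k1 ^ 5 * k2 ^ 3 + 4 * k1 ^ 3 * k2 ^ 5) * t) / t ^ 2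
            * Real.cos (th1 k1 (X1 + t / k1 ^ 4, t) - th2 k2 (X1 + t / k1 ^ 4, t))) ^ 2 := by
  simp only [B2]
  rw [N5_line k1 k2 X1 t hk1, N6_line k1 k2 X1 t hk1]
  field_simp
  ring
/-- Proposition 4.1 (k1-frame asymptotics): along `x = X1 + t/k1⁴`, the squared
envelopes of the algebraic two-soliton tend to the one-soliton profiles as
`t → ±∞`. -/
theorem algebraicTwoSoliton_asymptotics_k1_frame (k1 k2 : ℝ)
    (hk1 : k1 ≠ 0) (hk2 : k2 ≠ 0) (hkk : k1 ^ 2 ≠ k2 ^ 2) (X1 : ℝ) :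
    (Tendsto (fun t : ℝ => F1 k1 k2 (X1 + t / k1 ^ 4, t)) atTop
        (nhds (4 * k1 ^ 2 / (1 + 4 * k1 ^ 4 * X1 ^ 2))) ∧
      Tendsto (fun t : ℝ => F1 k1 k2 (X1 + t / k1 ^ 4, t)) atBot
        (nhds (4 * k1 ^ 2 / (1 + 4 * k1 ^ 4 * X1 ^ 2)))) ∧
    (Tendsto (fun t : ℝ => F3 k1 k2 (X1 + t / k1 ^ 4, t)) atTop
        (nhds (4 / (k1 ^ 2 * (1 + 4 * k1 ^ 4 * X1 ^ 2)))) ∧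
      Tendsto (fun t : ℝ => F3 k1 k2 (X1 + t / k1 ^ 4, t)) atBot
        (nhds (4 / (k1 ^ 2 * (1 + 4 * k1 ^ 4 * X1 ^ 2))))) := by
  have hK : k1 ^ 2 - k2 ^ 2 ≠ 0 := sub_ne_zero.2 hkk
  have hS : (0 : ℝ) < k1 ^ 2 + k2 ^ 2 := by positivity
  have hlT : Tendsto (fun t : ℝ => 1 / t) atTop (nhds 0) := by
    simpa [one_div] using tendsto_inv_atTop_zero (𝕜 := ℝ)
  have hlB : Tendsto (fun t : ℝ => 1 / t) atBot (nhds 0) := by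
    have h := (tendsto_inv_atTop_zero (𝕜 := ℝ)).comp tendsto_neg_atBot_atTop
    have h2 : Tendsto (fun t : ℝ => -(-t)⁻¹) atBot (nhds (-0)) := h.neg
    simpa [one_div, inv_neg] using h2
  have hneT : ∀ᶠ t in (atTop : Filter ℝ), t ≠ 0 := eventually_ne_atTop 0
  have hneB : ∀ᶠ t in (atBot : Filter ℝ), t ≠ 0 := eventually_ne_atBot 0
  have hc5 : c5v k1 k2 ≠ 0 := by
    simp only [c5v]
    refine neg_ne_zero.2 (div_ne_zero ?_ (pow_ne_zero 2 hk1))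
    exact mul_ne_zero (mul_ne_zero two_ne_zero (pow_ne_zero 3 hK)) hS.ne'
  have hc5sq : (0 : ℝ) < c5v k1 k2 ^ 2 :=
    lt_of_le_of_ne (sq_nonneg _) (Ne.symm (pow_ne_zero 2 hc5))
  have hcc : c5v k1 k2 ^ 2 + c6v k1 k2 X1 ^ 2 ≠ 0 :=
    (add_pos_of_pos_of_nonneg hc5sq (sq_nonneg _)).ne'
  have hcc2 : c5v k1 k2 ^ 2 + (-(c6v k1 k2 X1)) ^ 2 ≠ 0 :=
    (add_pos_of_pos_of_nonneg hc5sq (sq_nonneg _)).ne'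
  have hden1 : (1 : ℝ) + 4 * k1 ^ 4 * X1 ^ 2 ≠ 0 := by positivity
  have hden2 : k1 ^ 2 * (1 + 4 * k1 ^ 4 * X1 ^ 2) ≠ 0 :=
    mul_ne_zero (pow_ne_zero 2 hk1) hden1
  have hL1 : 4 * k1 ^ 2 / (1 + 4 * k1 ^ 4 * X1 ^ 2)
      = 4 * (k1 ^ 2 - k2 ^ 2) ^ 2 * c3v k1 k2 ^ 2
        / (c5v k1 k2 ^ 2 + c6v k1 k2 X1 ^ 2) := by
    rw [div_eq_div_iff hden1 hcc]
    simp only [c3v, c5v, c6v]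
    field_simp
    ring
  have hL2 : 4 / (k1 ^ 2 * (1 + 4 * k1 ^ 4 * X1 ^ 2))
      = 4 * (k1 ^ 2 - k2 ^ 2) ^ 2 * d1v k1 k2 ^ 2
        / (c5v k1 k2 ^ 2 + (-(c6v k1 k2 X1)) ^ 2) := by
    rw [div_eq_div_iff hden2 hcc2]
    simp only [d1v, c5v, c6v]
    field_simp
    ring
  refine ⟨⟨?_, ?_⟩, ?_, ?_⟩
  · simp only [F1]
    exact tendsto_main hlT hneT _ _
      (fun t : ℝ => th1 k1 (X1 + t / k1 ^ 4, t) - th2 k2 (X1 + t / k1 ^ 4, t))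
      (fun t : ℝ => th2 k2 (X1 + t / k1 ^ 4, t) - th1 k1 (X1 + t / k1 ^ 4, t))
      (k1 ^ 2 - k2 ^ 2) (m1v k1 k2 X1) (M2 k1 k2) (M4 k1 k2) (a3v k1 k2 X1) (c3v k1 k2)
      (a5v k1 k2 X1) (c5v k1 k2) (a6v k1 k2 X1) (c6v k1 k2 X1)
      (-(4 * k1 ^ 5 * k2 ^ 3 - 4 * k1 ^ 3 * k2 ^ 5))
      (-(4 * k1 ^ 5 * k2 ^ 3 + 4 * k1 ^ 3 * k2 ^ 5)) _
      (fun t ht => huA1 k1 k2 X1 hk1 t ht) (fun t ht => hvB1 k1 k2 X1 hk1 t ht) hcc hL1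
  · simp only [F1]
    exact tendsto_main hlB hneB _ _
      (fun t : ℝ => th1 k1 (X1 + t / k1 ^ 4, t) - th2 k2 (X1 + t / k1 ^ 4, t))
      (fun t : ℝ => th2 k2 (X1 + t / k1 ^ 4, t) - th1 k1 (X1 + t / k1 ^ 4, t))
      (k1 ^ 2 - k2 ^ 2) (m1v k1 k2 X1) (M2 k1 k2) (M4 k1 k2) (a3v k1 k2 X1) (c3v k1 k2)
      (a5v k1 k2 X1) (c5v k1 k2) (a6v k1 k2 X1) (c6v k1 k2 X1)
      (-(4 * k1 ^ 5 * k2 ^ 3 - 4 * k1 ^ 3 * k2 ^ 5))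
      (-(4 * k1 ^ 5 * k2 ^ 3 + 4 * k1 ^ 3 * k2 ^ 5)) _
      (fun t ht => huA1 k1 k2 X1 hk1 t ht) (fun t ht => hvB1 k1 k2 X1 hk1 t ht) hcc hL1
  · simp only [F3]
    exact tendsto_main hlT hneT _ _
      (fun t : ℝ => th1 k1 (X1 + t / k1 ^ 4, t) - th2 k2 (X1 + t / k1 ^ 4, t))
      (fun t : ℝ => th1 k1 (X1 + t / k1 ^ 4, t) - th2 k2 (X1 + t / k1 ^ 4, t))
      (k1 ^ 2 - k2 ^ 2) (n3v k1 k2 X1) (N4 k1 k2) (N2 k1 k2) (b1v k1 k2 X1) (d1v k1 k2)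
      (a5v k1 k2 X1) (c5v k1 k2) (-(a6v k1 k2 X1)) (-(c6v k1 k2 X1))
      (4 * k1 ^ 5 * k2 ^ 3 - 4 * k1 ^ 3 * k2 ^ 5)
      (4 * k1 ^ 5 * k2 ^ 3 + 4 * k1 ^ 3 * k2 ^ 5) _
      (fun t ht => huA2 k1 k2 X1 hk1 t ht) (fun t ht => hvB2 k1 k2 X1 hk1 t ht) hcc2 hL2
  · simp only [F3]
    exact tendsto_main hlB hneB _ _
      (fun t : ℝ => th1 k1 (X1 + t / k1 ^ 4, t) - th2 k2 (X1 + t / k1 ^ 4, t))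
      (fun t : ℝ => th1 k1 (X1 + t / k1 ^ 4, t) - th2 k2 (X1 + t / k1 ^ 4, t))
      (k1 ^ 2 - k2 ^ 2) (n3v k1 k2 X1) (N4 k1 k2) (N2 k1 k2) (b1v k1 k2 X1) (d1v k1 k2)
      (a5v k1 k2 X1) (c5v k1 k2) (-(a6v k1 k2 X1)) (-(c6v k1 k2 X1))
      (4 * k1 ^ 5 * k2 ^ 3 - 4 * k1 ^ 3 * k2 ^ 5)
      (4 * k1 ^ 5 * k2 ^ 3 + 4 * k1 ^ 3 * k2 ^ 5) _
      (fun t ht => huA2 k1 k2 X1 hk1 t ht) (fun t ht => hvB2 k1 k2 X1 hk1 t ht) hcc2 hL2
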